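/- arXiv:1604.01326 — 3 statements merged into one kernel-verified Lean document; each statement's English description precedes it below -/
import Mathlib

section
/- For any nonzero complex numbers s and any integers j, k, the identity A(s^k) = {1-k}_s · A(1) + {k}_s · A(s) holds, where {k}_s = (s^k - s^{-k})/(s - s^{-1}) if s ∉ {1,-1} and {k}_s = k·s^{k-1} if s ∈ {1,-1}. -/
open Matrix Complex

noncomputable def A (a : ℂ) : Matrix (Fin 2) (Fin 2) ℂ :=
  (1/2 : ℂ) • !![(a + a⁻¹) * I, a - a⁻¹; a - a⁻¹, -((a + a⁻¹) * I)]

/-- The quantity `{k}_s`. -/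
noncomputable def brace (s : ℂ) (k : ℤ) : ℂ :=
  if s = 1 ∨ s = -1 then (k : ℂ) * s ^ (k - 1) else (s ^ k - s ^ (-k)) / (s - s⁻¹)

/-! `A a` depends on `a` only through `a + a⁻¹` and `a - a⁻¹`, and linearly so; the theorem
therefore reduces to two scalar identities for `{k}_s`, checked separately on `s = ±1`, where
`s⁻¹ = s`, and off it, where `s - s⁻¹ ≠ 0`. -/

noncomputable def tracelessSym (p q : ℂ) : Matrix (Fin 2) (Fin 2) ℂ :=
  (1/2 : ℂ) • !![p * I, q; q, -(p * I)]

lemma A_eq_tracelessSym (a : ℂ) : A a = tracelessSym (a + a⁻¹) (a - a⁻¹) := rfl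

lemma A_one : A 1 = tracelessSym 2 0 := by
  rw [A_eq_tracelessSym, inv_one, one_add_one_eq_two, sub_self]

lemma smul_tracelessSym_add_smul (x y p q p' q' : ℂ) :
    x • tracelessSym p q + y • tracelessSym p' q' =
      tracelessSym (x * p + y * p') (x * q + y * q') := by
  ext i j
  fin_cases i <;> fin_cases j <;> simp [tracelessSym] <;> ring

section brace

variable {s : ℂ}

lemma brace_of_inv_eq_self (hs : s ≠ 0) (h : s⁻¹ = s) (k : ℤ) : brace s k = k * s ^ (k - 1) := by
  rw [brace, if_pos]
  rcases inv_eq_self₀.mp h with h | h | h <;> simp_all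

lemma brace_of_inv_ne_self (h : s⁻¹ ≠ s) (k : ℤ) :
    brace s k = (s ^ k - s ^ (-k)) / (s - s⁻¹) := by
  rw [brace, if_neg]
  rintro (rfl | rfl) <;> simp at h

lemma brace_mul_sub_inv (k : ℤ) : brace s k * (s - s⁻¹) = s ^ k - (s ^ k)⁻¹ := by
  by_cases h : s⁻¹ = s
  · rw [← _root_.inv_zpow, h]
    simp
  · rw [brace_of_inv_ne_self h, div_mul_cancel₀ _ (sub_ne_zero.mpr (Ne.symm h)),
      _root_.zpow_neg]

lemma brace_one_sub_mul_two_add (hs : s ≠ 0) (k : ℤ) :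
    brace s (1 - k) * 2 + brace s k * (s + s⁻¹) = s ^ k + (s ^ k)⁻¹ := by
  by_cases h : s⁻¹ = s
  · have hsq : s * s = 1 := by simpa [h] using inv_mul_cancel₀ hs
    rw [brace_of_inv_eq_self hs h, brace_of_inv_eq_self hs h, ← _root_.inv_zpow, h,
      show 1 - k - 1 = -k by ring, _root_.zpow_neg, ← _root_.inv_zpow, h, zpow_sub_one₀ hs, h]
    push_cast
    linear_combination (2 * k * s ^ k) * hsq
  · have hd : s - s⁻¹ ≠ 0 := sub_ne_zero.mpr (Ne.symm h)
    have hk : s ^ k ≠ 0 := zpow_ne_zero k hs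
    have hsub : s ^ (1 - k) = s * (s ^ k)⁻¹ := by rw [zpow_sub₀ hs, zpow_one, div_eq_mul_inv]
    rw [brace_of_inv_ne_self h, brace_of_inv_ne_self h, _root_.zpow_neg, _root_.zpow_neg, hsub,
      div_mul_eq_mul_div, div_mul_eq_mul_div, ← add_div, div_eq_iff hd]
    field_simp
    ring

end brace

theorem stmt_5 (s : ℂ) (hs : s ≠ 0) (k : ℤ) :
    A (s ^ k) = brace s (1 - k) • A 1 + brace s k • A s := by
  rw [A_one, A_eq_tracelessSym, A_eq_tracelessSym, smul_tracelessSym_add_smul, mul_zero,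
    zero_add, brace_one_sub_mul_two_add hs, brace_mul_sub_inv]
end

section
/- Let Z, W ∈ SL(2,ℂ) with tr(Z) = tr(W) = 0 and suppose -tr(ZW) = 2a with a ∈ {1,-1} and W ≠ a·Z. Then there is no P ∈ SL(2,ℂ) with P·Z·P⁻¹ = A(1) and P·W·P⁻¹ = A(s) for any s ∈ ℂ^× with s + s^{-1} = 2a; however, there exists P ∈ SL(2,ℂ) with P·Z·P⁻¹ = A(1) and P·W·P⁻¹ ∈ {S_a, S'_a}, where S_a = [[ai, 1],[0, -ai]] and S'_a = [[ai, 0],[1, -ai]]. -/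
open Matrix Complex

noncomputable def S (a : ℂ) : Matrix (Fin 2) (Fin 2) ℂ := !![a * I, 1; 0, -(a * I)]

noncomputable def S' (a : ℂ) : Matrix (Fin 2) (Fin 2) ℂ := !![a * I, 0; 1, -(a * I)]

/-!
If `s + s⁻¹ = 2a` with `a² = 1`, then `(s - a)² = 0`, so `A s = A a = a • A 1`; a simultaneous
conjugation sending `Z ↦ A 1` and `W ↦ A s` would then force `W = a • Z`.

A traceless `Z` of determinant one satisfies `Z² = -1` and is `SL₂`-conjugate to `A 1 = diag(i, -i)`.
After this conjugation `tr (A 1 * W) = -2a` fixes the diagonal of `W` as `(a i, -a i)`, and `det W = 1`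
makes the product of the off-diagonal entries vanish; they are not both zero as `W ≠ a • Z`.
Conjugation by `diag(t, t⁻¹)` fixes `A 1` and multiplies the off-diagonal entries by `t²` and `t⁻²`,
so a square root normalizes the nonzero one to `1`.
-/

namespace Matrix

variable {n R : Type*} [Fintype n] [DecidableEq n] [CommRing R] {P M N : Matrix n n R}

lemma conj_eq_iff_mul_eq (hP : IsUnit P) : P * M * P⁻¹ = N ↔ P * M = N * P := by
  have hP' := (isUnit_iff_isUnit_det P).1 hP
  constructor
  · rintro rfl
    rw [nonsing_inv_mul_cancel_right _ _ hP']
  · intro h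
    rw [h, mul_nonsing_inv_cancel_right _ _ hP']

lemma conj_eq_conj_iff (hP : IsUnit P) : P * M * P⁻¹ = P * N * P⁻¹ ↔ M = N := by
  refine ⟨fun h => ?_, fun h => h ▸ rfl⟩
  have hP' := (isUnit_iff_isUnit_det P).1 hP
  simpa [Matrix.mul_assoc, nonsing_inv_mul_cancel_left _ _ hP', nonsing_inv_mul _ hP'] using
    congrArg (fun X => P⁻¹ * X * P) h

lemma conj_mul_of_isUnit (hP : IsUnit P) : P * (M * N) * P⁻¹ = P * M * P⁻¹ * (P * N * P⁻¹) := by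
  simp only [Matrix.mul_assoc, nonsing_inv_mul_cancel_left _ _ ((isUnit_iff_isUnit_det P).1 hP)]

lemma conj_smul (r : R) : P * (r • M) * P⁻¹ = r • (P * M * P⁻¹) := by
  rw [Matrix.mul_smul, Matrix.smul_mul]

lemma conj_mul_eq_conj_conj (Q P M : Matrix n n R) :
    Q * P * M * (Q * P)⁻¹ = Q * (P * M * P⁻¹) * Q⁻¹ := by
  simp only [Matrix.mul_inv_rev, Matrix.mul_assoc]

lemma isUnit_of_det_eq_one (hP : P.det = 1) : IsUnit P :=
  (isUnit_iff_isUnit_det P).2 (hP ▸ isUnit_one)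

end Matrix

lemma eq_of_add_inv_eq_two_mul {K : Type*} [Field K] {a s : K} (ha : a ^ 2 = 1) (hs : s ≠ 0)
    (h : s + s⁻¹ = 2 * a) : s = a := by
  have : (s - a) ^ 2 = 0 := by linear_combination s * h + ha - mul_inv_cancel₀ hs
  exact sub_eq_zero.1 (pow_eq_zero_iff two_ne_zero |>.1 this)

lemma A_one_s15 : A 1 = !![I, 0; 0, -I] := by
  unfold A
  norm_num
  ring

lemma A_of_sq_eq_one {a : ℂ} (ha : a ^ 2 = 1) : A a = a • A 1 := by
  have ha' : a⁻¹ = a := inv_eq_of_mul_eq_one_left (by rw [← sq, ha])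
  rw [A_one_s15, A, ha']
  ext i j
  fin_cases i <;> fin_cases j <;> simp <;> ring

lemma diagonal_conj {K : Type*} [Field K] {t : K} (ht : t ≠ 0) (M : Matrix (Fin 2) (Fin 2) K) :
    !![t, 0; 0, t⁻¹] * M * !![t, 0; 0, t⁻¹]⁻¹ = !![M 0 0, t ^ 2 * M 0 1; M 1 0 / t ^ 2, M 1 1] := by
  rw [conj_eq_iff_mul_eq (isUnit_of_det_eq_one (by simp [ht])), eta_fin_two M]
  ext i j
  fin_cases i <;> fin_cases j <;> simp [Matrix.mul_apply] <;> field_simp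

lemma exists_conj_eq_A_one {Z : Matrix (Fin 2) (Fin 2) ℂ} (hd : Z.det = 1) (ht : Z.trace = 0) :
    ∃ P : Matrix (Fin 2) (Fin 2) ℂ, P.det = 1 ∧ P * Z * P⁻¹ = A 1 := by
  obtain ⟨z, b, c, rfl, hzbc⟩ : ∃ z b c : ℂ, Z = !![z, b; c, -z] ∧ z ^ 2 + b * c = -1 := by
    have h11 : Z 1 1 = -Z 0 0 := by rw [trace_fin_two] at ht; linear_combination ht
    refine ⟨Z 0 0, Z 0 1, Z 1 0, by rw [← h11]; exact eta_fin_two Z, ?_⟩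
    rw [det_fin_two, h11] at hd
    linear_combination -hd
  have hI : I ^ 2 = -1 := I_sq
  suffices ∃ P : Matrix (Fin 2) (Fin 2) ℂ, P.det = 1 ∧ P * !![z, b; c, -z] = A 1 * P from
    this.imp fun P ⟨hP, h⟩ => ⟨hP, (conj_eq_iff_mul_eq (isUnit_of_det_eq_one hP)).2 h⟩
  rw [A_one_s15]
  -- The rows of `P` are left eigenvectors of `Z` for `i` and `-i`, taken from the rank-one matrices
  -- `Z + i` and `Z - i`; the two candidate pairs have determinants `-2i (z + i)` and `-2i (z - i)`.
  by_cases hz : z + I = 0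
  · have hz' : z - I ≠ 0 := by
      rw [show z - I = -2 * I by linear_combination hz]
      simp
    refine ⟨!![c / (-2 * I * (z - I)), (I - z) / (-2 * I * (z - I)); z - I, b], ?_, ?_⟩
    · rw [det_fin_two_of]
      field_simp
      grind
    · ext i j
      fin_cases i <;> fin_cases j <;> simp [Matrix.mul_apply] <;> field_simp <;> grind
  · refine ⟨!![(z + I) / (-2 * I * (z + I)), b / (-2 * I * (z + I)); c, -z - I], ?_, ?_⟩
    · rw [det_fin_two_of]
      field_simp
      grind
    · ext i j
      fin_cases i <;> fin_cases j <;> simp [Matrix.mul_apply] <;> field_simp <;> grind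

lemma eq_of_trace_A_one_mul {a : ℂ} (ha : a ^ 2 = 1) {W : Matrix (Fin 2) (Fin 2) ℂ}
    (hd : W.det = 1) (ht : W.trace = 0) (h : (A 1 * W).trace = -(2 * a)) :
    W = !![a * I, W 0 1; W 1 0, -(a * I)] ∧ W 0 1 * W 1 0 = 0 := by
  rw [trace_fin_two] at ht
  rw [A_one_s15, trace_fin_two] at h
  simp only [Matrix.mul_apply, of_apply, cons_val', cons_val_fin_one, cons_val_zero,
    Fin.sum_univ_two, cons_val_one, zero_mul, add_zero, neg_mul, zero_add] at h
  have h00 : W 0 0 = a * I := by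
    have : (2 * I) * W 0 0 = (2 * I) * (a * I) := by linear_combination h + I * ht - 2 * a * I_sq
    exact mul_left_cancel₀ (by simp) this
  have h11 : W 1 1 = -(a * I) := by linear_combination ht - h00
  refine ⟨by rw [← h11, ← h00]; exact eta_fin_two W, ?_⟩
  rw [det_fin_two, h00, h11] at hd
  linear_combination -hd - a ^ 2 * I_sq + ha

lemma exists_conj_A_one_S_or_S' (a : ℂ) {b c : ℂ} (hbc : b * c = 0) (hne : ¬(b = 0 ∧ c = 0)) :
    ∃ D : Matrix (Fin 2) (Fin 2) ℂ, D.det = 1 ∧ D * A 1 * D⁻¹ = A 1 ∧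
      (D * !![a * I, b; c, -(a * I)] * D⁻¹ = S a ∨ D * !![a * I, b; c, -(a * I)] * D⁻¹ = S' a) := by
  have hscale : ∀ t : ℂ, t ≠ 0 → ∃ D : Matrix (Fin 2) (Fin 2) ℂ, D.det = 1 ∧ D * A 1 * D⁻¹ = A 1 ∧
      D * !![a * I, b; c, -(a * I)] * D⁻¹ = !![a * I, t ^ 2 * b; c / t ^ 2, -(a * I)] := by
    intro t ht
    refine ⟨!![t, 0; 0, t⁻¹], by simp [ht], ?_, ?_⟩ <;> rw [diagonal_conj ht]
    · simp [A_one_s15]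
    · simp
  rcases eq_or_ne b 0 with rfl | hb
  · have hc : c ≠ 0 := fun hc => hne ⟨rfl, hc⟩
    obtain ⟨t, ht⟩ := IsAlgClosed.exists_pow_nat_eq c two_pos
    obtain ⟨D, hD, hDA, hDW⟩ := hscale t (by rintro rfl; simp [eq_comm, hc] at ht)
    exact ⟨D, hD, hDA, Or.inr (by rw [hDW, S', ht]; simp [hc])⟩
  · obtain rfl : c = 0 := (mul_eq_zero.1 hbc).resolve_left hb
    obtain ⟨t, ht⟩ := IsAlgClosed.exists_pow_nat_eq b⁻¹ two_pos
    obtain ⟨D, hD, hDA, hDW⟩ := hscale t (by rintro rfl; simp [eq_comm, hb] at ht)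
    exact ⟨D, hD, hDA, Or.inl (by rw [hDW, S, ht]; simp [hb])⟩

theorem stmt_15 (Z W : Matrix (Fin 2) (Fin 2) ℂ)
    (hZd : Z.det = 1) (hWd : W.det = 1) (hZt : Z.trace = 0) (hWt : W.trace = 0)
    (a : ℂ) (ha : a = 1 ∨ a = -1) (htr : -(Z * W).trace = 2 * a) (hW : W ≠ a • Z) :
    (¬ ∃ (P : Matrix (Fin 2) (Fin 2) ℂ) (s : ℂ), P.det = 1 ∧ s ≠ 0 ∧ s + s⁻¹ = 2 * a ∧
        P * Z * P⁻¹ = A 1 ∧ P * W * P⁻¹ = A s) ∧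
    (∃ P : Matrix (Fin 2) (Fin 2) ℂ, P.det = 1 ∧ P * Z * P⁻¹ = A 1 ∧
        (P * W * P⁻¹ = S a ∨ P * W * P⁻¹ = S' a)) := by
  have ha2 : a ^ 2 = 1 := by rcases ha with rfl | rfl <;> norm_num
  constructor
  · rintro ⟨Q, s, hQd, hs, hsum, hQZ, hQW⟩
    refine hW ((conj_eq_conj_iff (isUnit_of_det_eq_one hQd)).1 ?_)
    rw [hQW, eq_of_add_inv_eq_two_mul ha2 hs hsum, A_of_sq_eq_one ha2, ← hQZ, conj_smul]
  obtain ⟨P, hPd, hPZ⟩ := exists_conj_eq_A_one hZd hZt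
  have hP := isUnit_of_det_eq_one hPd
  obtain ⟨hPW, hbc⟩ := eq_of_trace_A_one_mul ha2 (W := P * W * P⁻¹)
    (by rw [det_conj hP, hWd]) (by rw [trace_conj hP, hWt])
    (by rw [← hPZ, ← conj_mul_of_isUnit hP, trace_conj hP]; linear_combination -htr)
  have hne : ¬((P * W * P⁻¹) 0 1 = 0 ∧ (P * W * P⁻¹) 1 0 = 0) := by
    rintro ⟨hb, hc⟩
    refine hW ((conj_eq_conj_iff hP).1 ?_)
    rw [conj_smul, hPZ, hPW, hb, hc, A_one_s15]
    simp
  obtain ⟨D, hDd, hDA, hDW⟩ := exists_conj_A_one_S_or_S' a hbc hne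
  refine ⟨D * P, by rw [det_mul, hDd, hPd, one_mul], by rw [conj_mul_eq_conj_conj, hPZ, hDA], ?_⟩
  rwa [conj_mul_eq_conj_conj, hPW]
end

section
/- Let Z, W ∈ SL(2,ℂ) with tr(Z) = tr(W) = 0 and tr(ZW) ∉ {2, -2}. Then there exist P ∈ SL(2,ℂ) and s ∈ ℂ^× with s + s^{-1} = -tr(ZW) such that P·Z·P⁻¹ = A(1) and P·W·P⁻¹ = A(s). -/
open Matrix Complex

/-!
By Cayley–Hamilton, `Z² = W² = -1` and `ZW + WZ = tr(ZW) • 1`. Take `q` with `Zq = iq` and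
`s + s⁻¹ = -tr(ZW)`, and put `α = (s + s⁻¹)i/2`, `β = (s - s⁻¹)/2`, so that `A(s) = !![α, β; β, -α]`.
In the basis `q, β⁻¹(W - α)q` the matrices `Z` and `W` act as `A(1)` and `A(s)`. It is a basis,
since a common eigenvector of `Z` and `W` would force `tr(ZW)² = 4`, i.e. `s - s⁻¹ = 0`.
Dividing the change of basis by a square root of its determinant puts it in `SL(2, ℂ)`.
-/

section CommRing

variable {R : Type*} [CommRing R]

theorem Matrix.mul_self_eq_neg_one_of_trace_eq_zero [Nontrivial R] {M : Matrix (Fin 2) (Fin 2) R}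
    (hd : M.det = 1) (ht : M.trace = 0) : M * M = -1 := by
  have hCH := M.aeval_self_charpoly
  rw [charpoly_fin_two, ht, hd] at hCH
  simpa [sq, add_eq_zero_iff_eq_neg] using hCH

theorem Matrix.mul_add_mul_eq_trace_smul_one {Z W : Matrix (Fin 2) (Fin 2) R}
    (hZ : Z.trace = 0) (hW : W.trace = 0) : Z * W + W * Z = (Z * W).trace • 1 := by
  rw [trace_fin_two, add_eq_zero_iff_eq_neg'] at hZ hW
  ext i j
  fin_cases i <;> fin_cases j <;> simp [mul_apply, trace_fin_two, hZ, hW] <;> ring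

theorem Matrix.mul_transpose_of_pair_eq_transpose_of_pair_mul (M N : Matrix (Fin 2) (Fin 2) R)
    {q₁ q₂ : Fin 2 → R} (h₁ : M *ᵥ q₁ = N 0 0 • q₁ + N 1 0 • q₂)
    (h₂ : M *ᵥ q₂ = N 0 1 • q₁ + N 1 1 • q₂) :
    M * (of ![q₁, q₂])ᵀ = (of ![q₁, q₂])ᵀ * N := by
  ext i j
  fin_cases j
  · simpa [mul_apply, mulVec, dotProduct, mul_comm] using congrFun h₁ i
  · simpa [mul_apply, mulVec, dotProduct, mul_comm] using congrFun h₂ i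

open Polynomial in
theorem Matrix.exists_mulVec_eq_smul_of_isRoot_charpoly {n : Type*} [Fintype n] [DecidableEq n]
    [IsDomain R] {M : Matrix n n R} {μ : R} (hμ : M.charpoly.IsRoot μ) :
    ∃ v ≠ 0, M *ᵥ v = μ • v := by
  rw [IsRoot.def, eval_charpoly] at hμ
  obtain ⟨v, hv, hMv⟩ := exists_mulVec_eq_zero_iff.2 hμ
  refine ⟨v, hv, ?_⟩
  rw [sub_mulVec, sub_eq_zero, scalar_apply, ← smul_one_eq_diagonal, smul_mulVec,
    one_mulVec] at hMv
  exact hMv.symm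

end CommRing

section Field

variable {K : Type*} [Field K]

theorem sq_eq_four_of_common_eigenvector {n : Type*} [Fintype n] [DecidableEq n]
    {Z W : Matrix n n K} {t μ ν : K} {q : n → K} (hW : W * W = -1)
    (hZW : Z * W + W * Z = t • 1) (hμ : μ ^ 2 = -1) (hq : q ≠ 0) (hZq : Z *ᵥ q = μ • q)
    (hWq : W *ᵥ q = ν • q) : t ^ 2 = 4 := by
  have ht : t = 2 * μ * ν := by
    apply smul_left_injective K hq
    have hZWq := congrArg (· *ᵥ q) hZW
    simp only [add_mulVec, ← mulVec_mulVec, hZq, hWq, mulVec_smul, smul_mulVec, one_mulVec,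
      smul_smul] at hZWq
    show t • q = (2 * μ * ν) • q
    rw [← hZWq, ← add_smul]
    ring_nf
  have hν : ν ^ 2 = -1 := by
    apply smul_left_injective K hq
    have hWWq := congrArg (· *ᵥ q) hW
    simp only [← mulVec_mulVec, hWq, mulVec_smul, smul_smul, neg_mulVec, one_mulVec] at hWWq
    simpa [sq] using hWWq
  rw [ht]
  linear_combination 4 * ν ^ 2 * hμ - 4 * hν

open Polynomial in
theorem exists_add_inv_eq [IsAlgClosed K] (t : K) : ∃ s ≠ 0, s + s⁻¹ = t := by
  obtain ⟨s, hs⟩ := IsAlgClosed.exists_root (C 1 * X ^ 2 + C (-t) * X + C 1 : K[X])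
    (by rw [degree_quadratic one_ne_zero]; decide)
  have hs' : s ^ 2 - t * s + 1 = 0 := by simpa [sub_eq_add_neg] using hs
  have hs0 : s ≠ 0 := by rintro rfl; simp at hs'
  exact ⟨s, hs0, by field_simp; linear_combination hs'⟩

theorem sub_inv_ne_zero_of_add_inv_ne {s : K} (hs : s ≠ 0) (h₁ : s + s⁻¹ ≠ 2)
    (h₂ : s + s⁻¹ ≠ -2) : s - s⁻¹ ≠ 0 := by
  intro h
  have hss : s * s = 1 := by nth_rw 2 [sub_eq_zero.1 h]; exact mul_inv_cancel₀ hs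
  rcases mul_self_eq_one_iff.1 hss with rfl | rfl
  · exact h₁ (by norm_num)
  · exact h₂ (by norm_num)

theorem Matrix.exists_det_eq_one_conj {n : Type*} [Fintype n] [DecidableEq n] [Nonempty n]
    [IsAlgClosed K] {Q : Matrix n n K} (hQ : IsUnit Q.det) :
    ∃ P : Matrix n n K, P.det = 1 ∧ ∀ M N, M * Q = Q * N → P * M * P⁻¹ = N := by
  obtain ⟨c, hc⟩ := IsAlgClosed.exists_pow_nat_eq Q.det (Fintype.card_pos (α := n))
  have hc0 : c ≠ 0 := by
    rintro rfl
    rw [zero_pow Fintype.card_ne_zero] at hc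
    exact hQ.ne_zero hc.symm
  have hPinv : (c • Q⁻¹)⁻¹ = c⁻¹ • Q := by
    apply inv_eq_right_inv
    rw [smul_mul_smul_comm, mul_inv_cancel₀ hc0, nonsing_inv_mul Q hQ, one_smul]
  refine ⟨c • Q⁻¹, ?_, fun M N hMN => ?_⟩
  · rw [det_smul, det_nonsing_inv, Ring.inverse_eq_inv', hc, mul_inv_cancel₀ hQ.ne_zero]
  · rw [hPinv, smul_mul_assoc, mul_smul_comm, smul_mul_assoc, smul_smul, inv_mul_cancel₀ hc0,
      one_smul, mul_assoc, hMN, ← mul_assoc, nonsing_inv_mul Q hQ, one_mul]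

end Field

theorem exists_isUnit_det_mul_eq_mul_A {Z W : Matrix (Fin 2) (Fin 2) ℂ} {s : ℂ}
    (hs : s - s⁻¹ ≠ 0) (hW : W * W = -1) (hZW : Z * W + W * Z = -(s + s⁻¹) • 1)
    {q : Fin 2 → ℂ} (hq : q ≠ 0) (hZq : Z *ᵥ q = I • q) :
    ∃ Q : Matrix (Fin 2) (Fin 2) ℂ, IsUnit Q.det ∧ Z * Q = Q * A 1 ∧ W * Q = Q * A s := by
  have hs0 : s ≠ 0 := by rintro rfl; simp at hs
  set α := (s + s⁻¹) * I / 2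
  set β := (s - s⁻¹) / 2
  have hβ : β ≠ 0 := div_ne_zero hs two_ne_zero
  have hαβ : α ^ 2 + β ^ 2 = -1 := by
    simp only [α, β]
    field_simp
    linear_combination (s ^ 2 + 1) ^ 2 * I_sq
  set q₂ := β⁻¹ • (W *ᵥ q - α • q)
  have hq₂ : β • q₂ = W *ᵥ q - α • q := by rw [smul_smul, mul_inv_cancel₀ hβ, one_smul]
  have hWq : W *ᵥ q = α • q + β • q₂ := by rw [hq₂, add_sub_cancel]
  have hWq₂ : W *ᵥ q₂ = β • q - α • q₂ := by
    apply smul_right_injective _ hβ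
    simp only
    rw [← mulVec_smul, hq₂, mulVec_sub, mulVec_smul, mulVec_mulVec, hW, neg_mulVec, one_mulVec,
      hWq]
    linear_combination (norm := module) -(hαβ • q)
  have hZq₂ : Z *ᵥ q₂ = -I • q₂ := by
    apply smul_right_injective _ hβ
    simp only
    rw [← mulVec_smul, hq₂, mulVec_sub, mulVec_smul, hZq, mulVec_mulVec, eq_sub_of_add_eq hZW,
      sub_mulVec, ← mulVec_mulVec, hZq, mulVec_smul, smul_mulVec, one_mulVec, smul_comm β, hq₂]
    linear_combination (norm := module) (-(s + s⁻¹) • I_sq) • q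
  have hind : LinearIndependent ℂ ![q, q₂] := by
    refine (LinearIndependent.pair_iff' hq).2 fun a ha => hs ?_
    have h4 := sq_eq_four_of_common_eigenvector hW hZW I_sq hq hZq
      (ν := α + β * a) (by rw [hWq, ← ha, smul_smul, add_smul])
    have hsq : (s - s⁻¹) ^ 2 = 0 := by
      field_simp at h4 ⊢
      linear_combination h4
    exact pow_eq_zero_iff two_ne_zero |>.1 hsq
  refine ⟨(of ![q, q₂])ᵀ, ?_, mul_transpose_of_pair_eq_transpose_of_pair_mul _ _ ?_ ?_,
    mul_transpose_of_pair_eq_transpose_of_pair_mul _ _ ?_ ?_⟩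
  · rw [← isUnit_iff_isUnit_det, ← linearIndependent_cols_iff_isUnit]
    exact hind
  · simp [A, hZq]; module
  · simp [A, hZq₂]; module
  · simp [A, hWq, α, β]; module
  · simp [A, hWq₂, α, β]; module

theorem stmt_16 (Z W : Matrix (Fin 2) (Fin 2) ℂ)
    (hZd : Z.det = 1) (hWd : W.det = 1) (hZt : Z.trace = 0) (hWt : W.trace = 0)
    (htr : (Z * W).trace ≠ 2 ∧ (Z * W).trace ≠ -2) :
    ∃ (P : Matrix (Fin 2) (Fin 2) ℂ) (s : ℂ), P.det = 1 ∧ s ≠ 0 ∧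
      s + s⁻¹ = -(Z * W).trace ∧ P * Z * P⁻¹ = A 1 ∧ P * W * P⁻¹ = A s := by
  obtain ⟨s, hs, hst⟩ := exists_add_inv_eq (-(Z * W).trace)
  have hs' : s - s⁻¹ ≠ 0 := sub_inv_ne_zero_of_add_inv_ne hs
    (fun h => htr.2 (by linear_combination hst - h)) (fun h => htr.1 (by linear_combination hst - h))
  obtain ⟨q, hq, hZq⟩ := exists_mulVec_eq_smul_of_isRoot_charpoly (M := Z) (μ := I)
    (by simp [charpoly_fin_two, hZt, hZd])
  have hZW : Z * W + W * Z = -(s + s⁻¹) • 1 := by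
    rw [hst, neg_neg]
    exact mul_add_mul_eq_trace_smul_one hZt hWt
  obtain ⟨Q, hQ, hZQ, hWQ⟩ := exists_isUnit_det_mul_eq_mul_A hs'
    (mul_self_eq_neg_one_of_trace_eq_zero hWd hWt) hZW hq hZq
  obtain ⟨P, hP, hconj⟩ := exists_det_eq_one_conj hQ
  exact ⟨P, s, hP, hs, hst, hconj _ _ hZQ, hconj _ _ hWQ⟩
end
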